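/- arXiv:2602.22842 — 2 statements merged into one kernel-verified Lean document; each statement's English description precedes it below -/
import Mathlib

section
/- Let n ≥ 2 be an integer and let a < b be real numbers. If the real parameters θ = (c, δ_0, …, δ_{n-2}) satisfy α_j^a = w_j^a for j = 0 and j = 1, then δ_{n-2} = -(b-a)^2 / (8(2n-1)). -/
open Finset intervalIntegral

/-- Hermite quadrature weight at `a`:
`w_j^a = (b-a)^(j+1) * n * Σ_{k=j}^{n-1} C(k,j) (n+k-j-1)!/(n+k+1)!`. -/
noncomputable def wA (n : ℕ) (a b : ℝ) (j : ℕ) : ℝ :=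
  (b - a) ^ (j + 1) * n * ∑ k ∈ Finset.Icc j (n - 1),
    (k.choose j : ℝ) * (Nat.factorial (n + k - j - 1)) / (Nat.factorial (n + k + 1))

/-- Hermite quadrature weight at `b`: `w_j^b = (-1)^j w_j^a`. -/
noncomputable def wB (n : ℕ) (a b : ℝ) (j : ℕ) : ℝ := (-1 : ℝ) ^ j * wA n a b j

/-- RIBP weight at `a`:
`α_j^a = (-1)^(j+1) [ (a+c)^(j+1)/(j+1)! + Σ_{i=0}^{j-1} δ_{i+n-1-j} a^i/i! ]`. -/
noncomputable def alphaA (n : ℕ) (a c : ℝ) (δ : ℕ → ℝ) (j : ℕ) : ℝ :=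
  (-1 : ℝ) ^ (j + 1) * ((a + c) ^ (j + 1) / (Nat.factorial (j + 1)) +
    ∑ i ∈ Finset.range j, δ (i + n - 1 - j) * a ^ i / (Nat.factorial i))

/-- RIBP weight at `b`:
`α_j^b = (-1)^j [ (b+c)^(j+1)/(j+1)! + Σ_{i=0}^{j-1} δ_{i+n-1-j} b^i/i! ]`. -/
noncomputable def alphaB (n : ℕ) (b c : ℝ) (δ : ℕ → ℝ) (j : ℕ) : ℝ :=
  (-1 : ℝ) ^ j * ((b + c) ^ (j + 1) / (Nat.factorial (j + 1)) +
    ∑ i ∈ Finset.range j, δ (i + n - 1 - j) * b ^ i / (Nat.factorial i))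

/-- Polynomial kernel `P(x,θ) = (x+c)^n/n! + Σ_{i=0}^{n-2} δ_i x^i/i!`. -/
noncomputable def Pker (n : ℕ) (c : ℝ) (δ : ℕ → ℝ) (x : ℝ) : ℝ :=
  (x + c) ^ n / (Nat.factorial n) + ∑ i ∈ Finset.range (n - 1), δ i * x ^ i / (Nat.factorial i)

/-!
Only `c` and `δ_{n-2}` enter the first two RIBP weights: `α_0^a = -(a+c)` and
`α_1^a = (a+c)^2/2 + δ_{n-2}`. The factorial ratios in the first two Hermite weights are
`1/((n+k)(n+k+1))` and `(k+1)/((n+k)(n+k+1)(n+k+2))`, whose sums telescope to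
`w_0^a = (b-a)/2` and `w_1^a = (b-a)^2 (n-1)/(4(2n-1))`. The first equation gives
`a + c = -(b-a)/2`, and the second then determines `δ_{n-2}`.
-/

lemma sum_range_one_div_mul_add_one {x : ℝ} (hx : 0 < x) (N : ℕ) :
    ∑ k ∈ range N, 1 / ((x + k) * (x + k + 1)) = 1 / x - 1 / (x + N) := by
  have hstep (k : ℕ) :
      1 / ((x + k) * (x + k + 1)) = -1 / (x + ↑(k + 1)) - -1 / (x + k) := by
    have : 0 < x + k := by positivity
    push_cast
    field_simp
    ring
  rw [sum_congr rfl fun k _ ↦ hstep k, sum_range_sub (fun k : ℕ ↦ -1 / (x + k))]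
  push_cast
  ring

-- `F` is an antidifference, found from `(k+1)/(y(y+1)(y+2)) = 1/(y(y+1)) - (x+1)/(y(y+1)(y+2))`
-- with `y = x + k`.
lemma sum_range_add_one_div_mul_add_one_mul_add_two {x : ℝ} (hx : 0 < x) (N : ℕ) :
    ∑ k ∈ range N, ((k : ℝ) + 1) / ((x + k) * (x + k + 1) * (x + k + 2)) =
      1 / (2 * x) - 1 / (x + N) + (x + 1) / (2 * (x + N) * (x + N + 1)) := by
  set F : ℕ → ℝ := fun k ↦ -1 / (x + k) + (x + 1) / (2 * (x + k) * (x + k + 1)) with hF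
  have hstep (k : ℕ) :
      ((k : ℝ) + 1) / ((x + k) * (x + k + 1) * (x + k + 2)) = F (k + 1) - F k := by
    have : 0 < x + k := by positivity
    simp only [hF]
    push_cast
    field_simp
    ring
  simp_rw [hstep, sum_range_sub, hF]
  push_cast
  field_simp
  ring

lemma factorial_div_factorial_add_two (m : ℕ) :
    (m.factorial : ℝ) / (m + 2).factorial = 1 / ((m + 1) * (m + 2)) := by
  simp only [Nat.factorial_succ]
  push_cast
  field_simp
  ring

lemma factorial_div_factorial_add_three (m : ℕ) :
    (m.factorial : ℝ) / (m + 3).factorial = 1 / ((m + 1) * (m + 2) * (m + 3)) := by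
  simp only [Nat.factorial_succ]
  push_cast
  field_simp
  ring

lemma wA_zero {n : ℕ} (hn : n ≠ 0) (a b : ℝ) : wA n a b 0 = (b - a) / 2 := by
  obtain ⟨m, rfl⟩ := Nat.exists_eq_add_one_of_ne_zero hn
  have hterm (k : ℕ) :
      (k.choose 0 : ℝ) * (m + 1 + k - 0 - 1).factorial / (m + 1 + k + 1).factorial =
        1 / ((↑(m + 1) + k) * (↑(m + 1) + k + 1)) := by
    rw [Nat.choose_zero_right, Nat.cast_one, one_mul,
      show m + 1 + k - 0 - 1 = m + k by omega, show m + 1 + k + 1 = m + k + 2 by omega,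
      factorial_div_factorial_add_two]
    push_cast
    ring_nf
  have hpos : (0 : ℝ) < ↑(m + 1) := by positivity
  rw [wA, Nat.add_sub_cancel, ← Nat.range_succ_eq_Icc_zero]
  simp_rw [hterm, sum_range_one_div_mul_add_one hpos]
  push_cast
  field_simp
  ring

lemma wA_one {n : ℕ} (hn : n ≠ 0) (a b : ℝ) :
    wA n a b 1 = (b - a) ^ 2 * (n - 1) / (4 * (2 * n - 1)) := by
  obtain ⟨m, rfl⟩ := Nat.exists_eq_add_one_of_ne_zero hn
  have hterm (k : ℕ) :
      ((1 + k).choose 1 : ℝ) * (m + 1 + (1 + k) - 1 - 1).factorial /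
          (m + 1 + (1 + k) + 1).factorial =
        ((k : ℝ) + 1) / ((↑(m + 1) + k) * (↑(m + 1) + k + 1) * (↑(m + 1) + k + 2)) := by
    rw [Nat.choose_one_right, mul_div_assoc,
      show m + 1 + (1 + k) - 1 - 1 = m + k by omega,
      show m + 1 + (1 + k) + 1 = m + k + 3 by omega, factorial_div_factorial_add_three]
    push_cast
    field_simp
    ring
  have hpos : (0 : ℝ) < ↑(m + 1) := by positivity
  rw [wA, Nat.add_sub_cancel, ← Finset.Ico_add_one_right_eq_Icc, sum_Ico_eq_sum_range,
    Nat.add_sub_cancel]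
  simp_rw [hterm, sum_range_add_one_div_mul_add_one_mul_add_two hpos]
  push_cast
  rw [show (2 : ℝ) * (m + 1) - 1 = 2 * m + 1 by ring]
  field_simp
  ring

lemma alphaA_zero (n : ℕ) (a c : ℝ) (δ : ℕ → ℝ) : alphaA n a c δ 0 = -(a + c) := by
  simp [alphaA]

lemma alphaA_one (n : ℕ) (a c : ℝ) (δ : ℕ → ℝ) :
    alphaA n a c δ 1 = (a + c) ^ 2 / 2 + δ (n - 2) := by
  simp [alphaA, Nat.sub_sub]

theorem stmt10_general (n : ℕ) (hn : 2 ≤ n) (a b : ℝ) (c : ℝ) (δ : ℕ → ℝ)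
    (h0 : alphaA n a c δ 0 = wA n a b 0) (h1 : alphaA n a c δ 1 = wA n a b 1) :
    δ (n - 2) = -(b - a) ^ 2 / (8 * (2 * (n : ℝ) - 1)) := by
  have hn0 : n ≠ 0 := by omega
  rw [alphaA_zero, wA_zero hn0] at h0
  rw [alphaA_one, wA_one hn0] at h1
  have hc : a + c = -((b - a) / 2) := by linarith
  have hδ : δ (n - 2) = (b - a) ^ 2 * (n - 1) / (4 * (2 * n - 1)) - (b - a) ^ 2 / 8 := by
    rw [← h1, hc]
    ring
  have h2n : (2 * (n : ℝ) - 1) ≠ 0 := by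
    have : (2 : ℝ) ≤ n := by exact_mod_cast hn
    linarith
  rw [hδ, div_sub_div _ _ (mul_ne_zero four_ne_zero h2n) (by norm_num),
    div_eq_div_iff (by positivity) (mul_ne_zero (by norm_num) h2n)]
  ring

/-- if `α_j^a = w_j^a` for `j = 0, 1`, then `δ_{n-2} = -(b-a)²/(8(2n-1))`. -/
theorem stmt10 (n : ℕ) (hn : 2 ≤ n) (a b : ℝ) (hab : a < b) (c : ℝ) (δ : ℕ → ℝ)
    (h0 : alphaA n a c δ 0 = wA n a b 0) (h1 : alphaA n a c δ 1 = wA n a b 1) :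
    δ (n - 2) = -(b - a) ^ 2 / (8 * (2 * (n : ℝ) - 1)) :=
  stmt10_general n hn a b c δ h0 h1
end

section
/- Let a < b be real numbers and let f : ℝ → ℝ be twice continuously differentiable on [a,b]. Let c = (inf_{x∈[a,b]} f''(x) + sup_{x∈[a,b]} f''(x))/2 be the midrange of f'' on [a,b] and let Δ(x) = f''(x) - c. Then the n = 2 Hermite quadrature error satisfies the improved bound |E_2| = | ∫_a^b f(x) dx - (b-a)/2 · (f(a) + f(b)) - (b-a)^2/12 · (f'(a) - f'(b)) | ≤ ‖Δ‖_∞ · √3 · (b-a)^3 / 54, where ‖Δ‖_∞ = sup_{x∈[a,b]} |Δ(x)|; moreover ‖Δ‖_∞ ≤ sup_{x∈[a,b]} |f''(x)|, so this bound is at least as tight as the bound M · √3 · (b-a)^3 / 54 with M = sup_{x∈[a,b]} |f''(x)|. -/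
open intervalIntegral Topology
open MeasureTheory (volume)

/-! Integrating by parts twice gives the Peano kernel representation `E₂ = ∫ K f''` with
`K x = (x - a)(x - b)/2 + (b - a)²/12`. Since `∫ K = 0`, `f''` may be replaced by
`Δ = f'' - c`, whence `|E₂| ≤ ‖Δ‖_∞ ∫ |K|`. The kernel is negative exactly between its roots
`(a + b)/2 ± (b - a)√3/6` and positive outside them, which gives `∫ |K| = √3 (b - a)³/54`.
Finally, `f''` takes values in `[inf f'', sup f''] ⊆ [-N, N]` with `N = sup |f''|`, so it stays
within half the length of this interval, hence within `N`, of the midrange `c`. -/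

noncomputable def hermitePeanoKernel (a b x : ℝ) : ℝ :=
  (x - a) * (x - b) / 2 + (b - a) ^ 2 / 12

theorem continuous_hermitePeanoKernel (a b : ℝ) : Continuous (hermitePeanoKernel a b) := by
  unfold hermitePeanoKernel; fun_prop

@[simp]
theorem hermitePeanoKernel_left (a b : ℝ) : hermitePeanoKernel a b a = (b - a) ^ 2 / 12 := by
  simp [hermitePeanoKernel]

@[simp]
theorem hermitePeanoKernel_right (a b : ℝ) : hermitePeanoKernel a b b = (b - a) ^ 2 / 12 := by
  simp [hermitePeanoKernel]

theorem hasDerivAt_hermitePeanoKernel (a b x : ℝ) :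
    HasDerivAt (hermitePeanoKernel a b) (x - (a + b) / 2) x :=
  ((((hasDerivAt_id' x).sub_const a).mul ((hasDerivAt_id' x).sub_const b)).div_const 2
    |>.add_const _).congr_deriv (by ring)

theorem hermitePeanoKernel_eq_mul (a b x : ℝ) :
    hermitePeanoKernel a b x =
      (x - ((a + b) / 2 - (b - a) * √3 / 6)) * (x - ((a + b) / 2 + (b - a) * √3 / 6)) / 2 := by
  have h3 : √3 ^ 2 = 3 := Real.sq_sqrt (by norm_num)
  unfold hermitePeanoKernel
  linear_combination (b - a) ^ 2 / 72 * h3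

theorem integral_sub_mul_sub (p q : ℝ) : ∫ x in p..q, (x - p) * (x - q) = -(q - p) ^ 3 / 6 := by
  have hderiv : ∀ x, HasDerivAt (fun x => (x - p) ^ 2 * (2 * x - 3 * q + p) / 6)
      ((x - p) * (x - q)) x := fun x =>
    ((((hasDerivAt_id' x).sub_const p).fun_pow 2).mul
      ((((hasDerivAt_id' x).const_mul 2).sub_const (3 * q)).add_const p)).div_const 6
      |>.congr_deriv (by norm_num; ring)
  rw [integral_eq_sub_of_hasDerivAt (fun x _ => hderiv x)
    (by apply Continuous.intervalIntegrable; fun_prop)]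
  ring

theorem integral_hermitePeanoKernel (a b : ℝ) : ∫ x in a..b, hermitePeanoKernel a b x = 0 := by
  unfold hermitePeanoKernel
  rw [integral_add (by apply Continuous.intervalIntegrable; fun_prop) intervalIntegrable_const,
    integral_div, integral_sub_mul_sub, integral_const, smul_eq_mul]
  ring

theorem integral_abs_eq_integral_sub_two_mul_of_nonpos_between {g : ℝ → ℝ} {a p q b : ℝ}
    (hap : a ≤ p) (hpq : p ≤ q) (hqb : q ≤ b) (hg : IntervalIntegrable g volume a b)
    (h₁ : ∀ x ∈ Set.Icc a p, 0 ≤ g x) (h₂ : ∀ x ∈ Set.Icc p q, g x ≤ 0)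
    (h₃ : ∀ x ∈ Set.Icc q b, 0 ≤ g x) :
    ∫ x in a..b, |g x| = (∫ x in a..b, g x) - 2 * ∫ x in p..q, g x := by
  have hsub : ∀ {u v}, a ≤ u → u ≤ v → v ≤ b → IntervalIntegrable g volume u v :=
    fun hu huv hv => hg.mono_set <| by
      rw [Set.uIcc_of_le huv, Set.uIcc_of_le (hu.trans (huv.trans hv))]
      exact Set.Icc_subset_Icc hu hv
  have hap' := hsub le_rfl hap (hpq.trans hqb)
  have hpq' := hsub hap hpq hqb
  have hqb' := hsub (hap.trans hpq) hqb le_rfl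
  have hI₁ : ∫ x in a..p, |g x| = ∫ x in a..p, g x :=
    integral_congr fun x hx => abs_of_nonneg (h₁ x (by rwa [Set.uIcc_of_le hap] at hx))
  have hI₂ : ∫ x in p..q, |g x| = -∫ x in p..q, g x := by
    rw [← integral_neg]
    exact integral_congr fun x hx => abs_of_nonpos (h₂ x (by rwa [Set.uIcc_of_le hpq] at hx))
  have hI₃ : ∫ x in q..b, |g x| = ∫ x in q..b, g x :=
    integral_congr fun x hx => abs_of_nonneg (h₃ x (by rwa [Set.uIcc_of_le hqb] at hx))
  rw [← integral_add_adjacent_intervals (hap'.trans hpq').abs hqb'.abs,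
    ← integral_add_adjacent_intervals hap'.abs hpq'.abs,
    ← integral_add_adjacent_intervals (hap'.trans hpq') hqb',
    ← integral_add_adjacent_intervals hap' hpq', hI₁, hI₂, hI₃]
  ring

theorem integral_abs_hermitePeanoKernel {a b : ℝ} (hab : a ≤ b) :
    ∫ x in a..b, |hermitePeanoKernel a b x| = √3 * (b - a) ^ 3 / 54 := by
  set r := (b - a) * √3 / 6 with hr_def
  set p := (a + b) / 2 - r with hp
  set q := (a + b) / 2 + r with hq
  have h3 : √3 ^ 2 = 3 := Real.sq_sqrt (by norm_num)
  have hr : 0 ≤ r := by positivity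
  have hrb : r ≤ (b - a) / 2 := by
    have : √3 ≤ 3 := by nlinarith [Real.sqrt_nonneg 3]
    rw [hr_def]; nlinarith
  have hK : ∀ x, hermitePeanoKernel a b x = (x - p) * (x - q) / 2 := hermitePeanoKernel_eq_mul a b
  rw [integral_abs_eq_integral_sub_two_mul_of_nonpos_between (p := p) (q := q) (by linarith)
      (by linarith) (by linarith) ((continuous_hermitePeanoKernel a b).intervalIntegrable a b)
      (fun x hx => by rw [hK]; nlinarith [hx.2])
      (fun x hx => by rw [hK]; nlinarith [hx.1, hx.2])
      (fun x hx => by rw [hK]; nlinarith [hx.1]),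
    integral_hermitePeanoKernel]
  simp only [hK, integral_div, integral_sub_mul_sub]
  linear_combination (b - a) ^ 3 * √3 / 162 * h3

theorem ContDiffOn.hasDerivAt_iteratedDerivWithin {𝕜 F : Type*} [NontriviallyNormedField 𝕜]
    [NormedAddCommGroup F] [NormedSpace 𝕜 F] {f : 𝕜 → F} {s : Set 𝕜} {x : 𝕜} {n : WithTop ℕ∞}
    {k : ℕ} (hf : ContDiffOn 𝕜 n f s) (hk : k < n) (hs : UniqueDiffOn 𝕜 s) (hx : s ∈ 𝓝 x) :
    HasDerivAt (iteratedDerivWithin k f s) (iteratedDerivWithin (k + 1) f s x) x := by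
  rw [iteratedDerivWithin_succ]
  exact ((hf.differentiableOn_iteratedDerivWithin hk hs) x (mem_of_mem_nhds hx)
    |>.hasDerivWithinAt).hasDerivAt hx

theorem integral_sub_hermite_eq_integral_hermitePeanoKernel_mul {f f' f'' : ℝ → ℝ} {a b : ℝ}
    (hab : a ≤ b) (hf : ContinuousOn f (Set.Icc a b)) (hf' : ContinuousOn f' (Set.Icc a b))
    (hf'' : IntervalIntegrable f'' volume a b)
    (hderiv : ∀ x ∈ Set.Ioo a b, HasDerivAt f (f' x) x)
    (hderiv' : ∀ x ∈ Set.Ioo a b, HasDerivAt f' (f'' x) x) :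
    (∫ x in a..b, f x) - (b - a) / 2 * (f a + f b) - (b - a) ^ 2 / 12 * (f' a - f' b)
      = ∫ x in a..b, hermitePeanoKernel a b x * f'' x := by
  have hfi : IntervalIntegrable f volume a b :=
    hf.intervalIntegrable_of_Icc hab
  have hKf''i : IntervalIntegrable (fun x => hermitePeanoKernel a b x * f'' x)
      volume a b :=
    hf''.continuousOn_mul (continuous_hermitePeanoKernel a b).continuousOn
  -- `K'' = 1`, so `K f' - K' f` is an antiderivative of `K f'' - f`.
  have hFTC := integral_eq_sub_of_hasDeriv_right_of_le hab
    (f := fun x => hermitePeanoKernel a b x * f' x - (x - (a + b) / 2) * f x)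
    (f' := fun x => hermitePeanoKernel a b x * f'' x - f x)
    (((continuous_hermitePeanoKernel a b).continuousOn.mul hf').sub
      ((continuous_id.sub continuous_const).continuousOn.mul hf))
    (fun x hx => (((hasDerivAt_hermitePeanoKernel a b x).mul (hderiv' x hx)).sub
      (((hasDerivAt_id' x).sub_const _).mul (hderiv x hx)) |>.congr_deriv (by ring))
      |>.hasDerivWithinAt)
    (hKf''i.sub hfi)
  rw [integral_sub hKf''i hfi, hermitePeanoKernel_left, hermitePeanoKernel_right] at hFTC
  linear_combination -hFTC

theorem integral_hermitePeanoKernel_mul_sub_const {g : ℝ → ℝ} {a b : ℝ}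
    (hg : IntervalIntegrable g volume a b) (c : ℝ) :
    ∫ x in a..b, hermitePeanoKernel a b x * (g x - c)
      = ∫ x in a..b, hermitePeanoKernel a b x * g x := by
  have hK := continuous_hermitePeanoKernel a b
  simp only [mul_sub]
  rw [integral_sub (hg.continuousOn_mul hK.continuousOn)
      (hK.intervalIntegrable a b |>.mul_const c),
    integral_mul_const, integral_hermitePeanoKernel, zero_mul, sub_zero]

theorem abs_integral_mul_le_mul_integral_abs {k g : ℝ → ℝ} {a b M : ℝ} (hab : a ≤ b)
    (hk : IntervalIntegrable k volume a b)
    (hkg : IntervalIntegrable (fun x => k x * g x) volume a b)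
    (hg : ∀ x ∈ Set.Icc a b, |g x| ≤ M) :
    |∫ x in a..b, k x * g x| ≤ M * ∫ x in a..b, |k x| := by
  calc |∫ x in a..b, k x * g x| ≤ ∫ x in a..b, |k x * g x| :=
        abs_integral_le_integral_abs hab
    _ ≤ ∫ x in a..b, |k x| * M :=
        integral_mono_on hab hkg.abs (hk.abs.mul_const M) fun x hx => by
          rw [abs_mul]; exact mul_le_mul_of_nonneg_left (hg x hx) (abs_nonneg _)
    _ = M * ∫ x in a..b, |k x| := by rw [integral_mul_const, mul_comm]

theorem sSup_abs_sub_midrange_le {α : Type*} {s : Set α} {g : α → ℝ} (hs : s.Nonempty)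
    (hg : BddAbove ((fun x => |g x|) '' s)) :
    sSup ((fun x => |g x - (sInf (g '' s) + sSup (g '' s)) / 2|) '' s)
      ≤ sSup ((fun x => |g x|) '' s) := by
  set N := sSup ((fun x => |g x|) '' s)
  have hN : ∀ x ∈ s, |g x| ≤ N := fun x hx => le_csSup hg ⟨x, hx, rfl⟩
  have hbddAbove : BddAbove (g '' s) :=
    ⟨N, by rintro _ ⟨x, hx, rfl⟩; exact (abs_le.1 (hN x hx)).2⟩
  have hbddBelow : BddBelow (g '' s) :=
    ⟨-N, by rintro _ ⟨x, hx, rfl⟩; exact (abs_le.1 (hN x hx)).1⟩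
  have hsup : sSup (g '' s) ≤ N :=
    csSup_le (hs.image g) (by rintro _ ⟨x, hx, rfl⟩; exact (abs_le.1 (hN x hx)).2)
  have hinf : -N ≤ sInf (g '' s) :=
    le_csInf (hs.image g) (by rintro _ ⟨x, hx, rfl⟩; exact (abs_le.1 (hN x hx)).1)
  refine csSup_le (hs.image _) ?_
  rintro _ ⟨x, hx, rfl⟩
  have hle : g x ≤ sSup (g '' s) := le_csSup hbddAbove ⟨x, hx, rfl⟩
  have hge : sInf (g '' s) ≤ g x := csInf_le hbddBelow ⟨x, hx, rfl⟩
  rw [abs_le]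
  constructor <;> linarith

/-- the improved midrange bound `|E₂| ≤ ‖Δ‖_∞ √3 (b-a)³/54`, where
`Δ = f'' - c` with `c` the midrange of `f''` on `[a,b]`; moreover
`‖Δ‖_∞ ≤ sup_{[a,b]} |f''|`, so this bound is at least as tight as the classical one. -/
theorem stmt19 (a b : ℝ) (hab : a < b) (f : ℝ → ℝ)
    (hf : ContDiffOn ℝ 2 f (Set.Icc a b)) :
    let f2 : ℝ → ℝ := iteratedDerivWithin 2 f (Set.Icc a b)
    let c : ℝ := (sInf (f2 '' Set.Icc a b) + sSup (f2 '' Set.Icc a b)) / 2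
    let Δ : ℝ → ℝ := fun x => f2 x - c
    let normΔ : ℝ := sSup ((fun x => |Δ x|) '' Set.Icc a b)
    |(∫ x in a..b, f x) - (b - a) / 2 * (f a + f b)
        - (b - a) ^ 2 / 12 *
          (iteratedDerivWithin 1 f (Set.Icc a b) a - iteratedDerivWithin 1 f (Set.Icc a b) b)|
      ≤ normΔ * Real.sqrt 3 * (b - a) ^ 3 / 54
    ∧ normΔ ≤ sSup ((fun x => |f2 x|) '' Set.Icc a b) := by
  intro f2 c Δ normΔ
  have hs : UniqueDiffOn ℝ (Set.Icc a b) := uniqueDiffOn_Icc hab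
  have hf2 : ContinuousOn f2 (Set.Icc a b) := hf.continuousOn_iteratedDerivWithin le_rfl hs
  have hΔ : ∀ x ∈ Set.Icc a b, |Δ x| ≤ normΔ := fun x hx =>
    le_csSup (isCompact_Icc.image_of_continuousOn (hf2.sub continuousOn_const).abs).bddAbove
      ⟨x, hx, rfl⟩
  refine ⟨?_, sSup_abs_sub_midrange_le (Set.nonempty_Icc.2 hab.le)
    (isCompact_Icc.image_of_continuousOn hf2.abs).bddAbove⟩
  have hderiv : ∀ k < 2, ∀ x ∈ Set.Ioo a b, HasDerivAt (iteratedDerivWithin k f (Set.Icc a b))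
      (iteratedDerivWithin (k + 1) f (Set.Icc a b) x) x := fun k hk x hx =>
    hf.hasDerivAt_iteratedDerivWithin (by exact_mod_cast hk) hs (Icc_mem_nhds hx.1 hx.2)
  have hf2i : IntervalIntegrable f2 volume a b := hf2.intervalIntegrable_of_Icc hab.le
  rw [integral_sub_hermite_eq_integral_hermitePeanoKernel_mul hab.le hf.continuousOn
      (hf.continuousOn_iteratedDerivWithin (by norm_num) hs) hf2i
      (by simpa using hderiv 0 (by norm_num)) (hderiv 1 (by norm_num)),
    ← integral_hermitePeanoKernel_mul_sub_const hf2i c]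
  calc _ ≤ normΔ * ∫ x in a..b, |hermitePeanoKernel a b x| :=
        abs_integral_mul_le_mul_integral_abs hab.le
          ((continuous_hermitePeanoKernel a b).intervalIntegrable a b)
          ((hf2i.sub intervalIntegrable_const).continuousOn_mul
            (continuous_hermitePeanoKernel a b).continuousOn) hΔ
    _ = normΔ * √3 * (b - a) ^ 3 / 54 := by rw [integral_abs_hermitePeanoKernel hab.le]; ring
end
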